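/- Tangential components of the normal variation: Let ψ, v : ℝ² → ℝ³ be differentiable at x ∈ ℝ² with ∂₁ψ(x) × ∂₂ψ(x) ≠ 0, and let δn denote the derivative at t = 0 of the map t ↦ n[ψ + t v](x). Then δn · n[ψ](x) = 0, and for k = 1, 2: δn · ∂ₖψ(x) = −n[ψ](x) · ∂ₖv(x). -/

import Mathlib

open Matrix MeasureTheory

noncomputable section

/-- `i`-th partial derivative of `ψ : ℝ² → ℝ³` at `x`. -/
def pd (ψ : (Fin 2 → ℝ) → (Fin 3 → ℝ)) (i : Fin 2) (x : Fin 2 → ℝ) : Fin 3 → ℝ :=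
  fderiv ℝ ψ x (Pi.single i 1)

/-- Jacobian matrix `∇ψ(x) ∈ ℝ^{3×2}`. -/
def jac (ψ : (Fin 2 → ℝ) → (Fin 3 → ℝ)) (x : Fin 2 → ℝ) : Matrix (Fin 3) (Fin 2) ℝ :=
  Matrix.of fun m i => pd ψ i x m

/-- First fundamental form `g[ψ](x) = (∇ψ(x))ᵀ ∇ψ(x)`. -/
def met (ψ : (Fin 2 → ℝ) → (Fin 3 → ℝ)) (x : Fin 2 → ℝ) : Matrix (Fin 2) (Fin 2) ℝ :=
  (jac ψ x)ᵀ * jac ψ x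

/-- Euclidean inner product on `ℝ³`. -/
def dot3 (u v : Fin 3 → ℝ) : ℝ := ∑ m, u m * v m

/-- Euclidean norm on `ℝ³`. -/
def norm3 (u : Fin 3 → ℝ) : ℝ := Real.sqrt (dot3 u u)

/-- Cross product `∂₁ψ(x) × ∂₂ψ(x)`. -/
def crossPsi (ψ : (Fin 2 → ℝ) → (Fin 3 → ℝ)) (x : Fin 2 → ℝ) : Fin 3 → ℝ :=
  crossProduct (pd ψ 0 x) (pd ψ 1 x)

/-- Unit normal `n[ψ](x)`. -/
def nrm (ψ : (Fin 2 → ℝ) → (Fin 3 → ℝ)) (x : Fin 2 → ℝ) : Fin 3 → ℝ :=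
  (norm3 (crossPsi ψ x))⁻¹ • crossPsi ψ x

/-- Second partial derivative `∂ᵢ∂ⱼψ(x)`. -/
def pd2 (ψ : (Fin 2 → ℝ) → (Fin 3 → ℝ)) (i j : Fin 2) (x : Fin 2 → ℝ) : Fin 3 → ℝ :=
  pd (pd ψ j) i x

/-- Hessian `D²ψᵐ(x)` of the `m`-th component. -/
def hess (ψ : (Fin 2 → ℝ) → (Fin 3 → ℝ)) (m : Fin 3) (x : Fin 2 → ℝ) :
    Matrix (Fin 2) (Fin 2) ℝ :=
  Matrix.of fun i j => pd2 ψ i j x m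

/-- Second fundamental form `II[ψ](x)ᵢⱼ = ∂ᵢ∂ⱼψ(x)·n[ψ](x)`. -/
def sff (ψ : (Fin 2 → ℝ) → (Fin 3 → ℝ)) (x : Fin 2 → ℝ) : Matrix (Fin 2) (Fin 2) ℝ :=
  Matrix.of fun i j => dot3 (pd2 ψ i j x) (nrm ψ x)

/-- Frobenius inner product `A : B`. -/
def frob {n : Type*} [Fintype n] (A B : Matrix n n ℝ) : ℝ := ∑ i, ∑ j, A i j * B i j

/-- Gram–Schmidt frame vector `y¹[ψ](x)`. -/
def y1 (ψ : (Fin 2 → ℝ) → (Fin 3 → ℝ)) (x : Fin 2 → ℝ) : Fin 3 → ℝ :=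
  (norm3 (pd ψ 0 x))⁻¹ • pd ψ 0 x

/-- Gram–Schmidt vector `ŷ²[ψ](x)` (before normalization). -/
def yhat2 (ψ : (Fin 2 → ℝ) → (Fin 3 → ℝ)) (x : Fin 2 → ℝ) : Fin 3 → ℝ :=
  pd ψ 1 x - (dot3 (pd ψ 1 x) (y1 ψ x)) • y1 ψ x

/-- Gram–Schmidt frame vector `y²[ψ](x)`. -/
def y2 (ψ : (Fin 2 → ℝ) → (Fin 3 → ℝ)) (x : Fin 2 → ℝ) : Fin 3 → ℝ :=
  (norm3 (yhat2 ψ x))⁻¹ • yhat2 ψ x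

/-! Write `n_t` for the unit normal of `ψ + t v`. Differentiating `n_t · n_t = 1` at `t = 0`
gives `δn · n = 0`; differentiating `n_t · (∂ₖψ + t ∂ₖv) = 0`, which holds for every `t`, gives
`δn · ∂ₖψ + n · ∂ₖv = 0`. That `t ↦ n_t` is differentiable at `0` follows from
`∂₁ψ_t × ∂₂ψ_t` being polynomial in `t` and nonzero at `t = 0`. -/

open Filter Topology

theorem HasDerivAt.dotProduct {n : Type*} [Fintype n] {u w : ℝ → n → ℝ} {u' w' : n → ℝ}
    {t : ℝ} (hu : HasDerivAt u u' t) (hw : HasDerivAt w w' t) :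
    HasDerivAt (fun s => u s ⬝ᵥ w s) (u' ⬝ᵥ w t + u t ⬝ᵥ w') t := by
  have := HasDerivAt.fun_sum (u := Finset.univ) fun i _ =>
    (hasDerivAt_pi.1 hu i).fun_mul (hasDerivAt_pi.1 hw i)
  rw [Finset.sum_add_distrib] at this
  exact this

theorem HasDerivAt.dotProduct_add_eq_zero_of_eventually_const {n : Type*} [Fintype n]
    {u w : ℝ → n → ℝ} {u' w' : n → ℝ} {t c : ℝ} (hu : HasDerivAt u u' t)
    (hw : HasDerivAt w w' t) (hc : ∀ᶠ s in 𝓝 t, u s ⬝ᵥ w s = c) :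
    u' ⬝ᵥ w t + u t ⬝ᵥ w' = 0 :=
  (hu.dotProduct hw).unique ((hasDerivAt_const t c).congr_of_eventuallyEq hc)

theorem DifferentiableAt.crossProduct {E : Type*} [NormedAddCommGroup E] [NormedSpace ℝ E]
    {u w : E → Fin 3 → ℝ} {t : E} (hu : DifferentiableAt ℝ u t)
    (hw : DifferentiableAt ℝ w t) : DifferentiableAt ℝ (fun s => u s ⨯₃ w s) t := by
  have hu' := differentiableAt_pi.1 hu
  have hw' := differentiableAt_pi.1 hw
  refine differentiableAt_pi.2 fun m => ?_
  fin_cases m <;> simp [cross_apply] <;> fun_prop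

lemma dot3_eq_dotProduct (u w : Fin 3 → ℝ) : dot3 u w = u ⬝ᵥ w := rfl

lemma norm3_sq (u : Fin 3 → ℝ) : norm3 u ^ 2 = u ⬝ᵥ u :=
  Real.sq_sqrt (Finset.sum_nonneg fun _ _ => mul_self_nonneg _)

lemma norm3_ne_zero {u : Fin 3 → ℝ} (hu : u ≠ 0) : norm3 u ≠ 0 := by
  intro h
  exact hu (dotProduct_self_eq_zero.1 (by rw [← norm3_sq, h, sq, zero_mul]))

lemma inv_norm3_smul_dotProduct_self {u : Fin 3 → ℝ} (hu : u ≠ 0) :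
    ((norm3 u)⁻¹ • u) ⬝ᵥ ((norm3 u)⁻¹ • u) = 1 := by
  rw [smul_dotProduct, dotProduct_smul, smul_eq_mul, smul_eq_mul, ← norm3_sq]
  field_simp [norm3_ne_zero hu]

theorem DifferentiableAt.inv_norm3_smul {u : ℝ → Fin 3 → ℝ} {t : ℝ}
    (hu : DifferentiableAt ℝ u t) (h0 : u t ≠ 0) :
    DifferentiableAt ℝ (fun s => (norm3 (u s))⁻¹ • u s) t := by
  have hdot : DifferentiableAt ℝ (fun s => u s ⬝ᵥ u s) t :=
    (hu.hasDerivAt.dotProduct hu.hasDerivAt).differentiableAt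
  have hsq : u t ⬝ᵥ u t ≠ 0 := dotProduct_self_eq_zero.not.2 h0
  exact ((hdot.sqrt hsq).inv (norm3_ne_zero h0)).smul hu

lemma nrm_dotProduct_pd (ψ : (Fin 2 → ℝ) → (Fin 3 → ℝ)) (x : Fin 2 → ℝ) (k : Fin 2) :
    nrm ψ x ⬝ᵥ pd ψ k x = 0 := by
  rw [nrm, smul_dotProduct, crossPsi, dotProduct_comm]
  fin_cases k
  · simp [dot_self_cross]
  · simp [dot_cross_self]

lemma pd_add_smul {ψ v : (Fin 2 → ℝ) → (Fin 3 → ℝ)} {x : Fin 2 → ℝ}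
    (hψ : DifferentiableAt ℝ ψ x) (hv : DifferentiableAt ℝ v x) (t : ℝ) (i : Fin 2) :
    pd (fun y => ψ y + t • v y) i x = pd ψ i x + t • pd v i x := by
  rw [pd, fderiv_fun_add (g := fun y => t • v y) hψ (hv.const_smul t),
    fderiv_fun_const_smul hv]
  rfl

lemma differentiable_crossPsi_add_smul {ψ v : (Fin 2 → ℝ) → (Fin 3 → ℝ)} {x : Fin 2 → ℝ}
    (hψ : DifferentiableAt ℝ ψ x) (hv : DifferentiableAt ℝ v x) :
    Differentiable ℝ fun t : ℝ => crossPsi (fun y => ψ y + t • v y) x := by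
  simp only [crossPsi, pd_add_smul hψ hv]
  exact fun t => DifferentiableAt.crossProduct (by fun_prop) (by fun_prop)

lemma differentiableAt_nrm_add_smul {ψ v : (Fin 2 → ℝ) → (Fin 3 → ℝ)} {x : Fin 2 → ℝ}
    (hψ : DifferentiableAt ℝ ψ x) (hv : DifferentiableAt ℝ v x) (hc : crossPsi ψ x ≠ 0) :
    DifferentiableAt ℝ (fun t : ℝ => nrm (fun y => ψ y + t • v y) x) 0 :=
  (differentiable_crossPsi_add_smul hψ hv 0).inv_norm3_smul (by simpa using hc)

lemma eventually_nrm_add_smul_dotProduct_self {ψ v : (Fin 2 → ℝ) → (Fin 3 → ℝ)}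
    {x : Fin 2 → ℝ} (hψ : DifferentiableAt ℝ ψ x) (hv : DifferentiableAt ℝ v x)
    (hc : crossPsi ψ x ≠ 0) :
    ∀ᶠ t in 𝓝 (0 : ℝ), nrm (fun y => ψ y + t • v y) x ⬝ᵥ nrm (fun y => ψ y + t • v y) x = 1 :=
  ((differentiable_crossPsi_add_smul hψ hv 0).continuousAt.eventually_ne
    (by simpa using hc)).mono fun _ => inv_norm3_smul_dotProduct_self

/-- Tangential components of the first variation `δn` of the
unit normal: `δn · n[ψ](x) = 0` and `δn · ∂ₖψ(x) = −n[ψ](x) · ∂ₖv(x)`. -/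
theorem normal_variation_components
    (ψ v : (Fin 2 → ℝ) → (Fin 3 → ℝ)) (x : Fin 2 → ℝ)
    (hψ : DifferentiableAt ℝ ψ x) (hv : DifferentiableAt ℝ v x)
    (hc : crossPsi ψ x ≠ 0) :
    dot3 (deriv (fun t : ℝ => nrm (fun y => ψ y + t • v y) x) 0) (nrm ψ x) = 0 ∧
    ∀ k : Fin 2,
      dot3 (deriv (fun t : ℝ => nrm (fun y => ψ y + t • v y) x) 0) (pd ψ k x)
        = -(dot3 (nrm ψ x) (pd v k x)) := by
  have hN := (differentiableAt_nrm_add_smul hψ hv hc).hasDerivAt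
  have hN0 : nrm (fun y => ψ y + (0 : ℝ) • v y) x = nrm ψ x := by simp
  simp only [dot3_eq_dotProduct]
  constructor
  · have hunit := hN.dotProduct_add_eq_zero_of_eventually_const hN
      (eventually_nrm_add_smul_dotProduct_self hψ hv hc)
    rw [hN0, dotProduct_comm (nrm ψ x)] at hunit
    linarith
  · intro k
    have hline : HasDerivAt (fun t : ℝ => pd ψ k x + t • pd v k x) (pd v k x) 0 := by
      simpa using ((hasDerivAt_id (0 : ℝ)).smul_const (pd v k x)).const_add (pd ψ k x)
    have horth := hN.dotProduct_add_eq_zero_of_eventually_const hline (c := 0) (.of_forall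
      fun t => by rw [← pd_add_smul hψ hv]; exact nrm_dotProduct_pd _ x k)
    rw [hN0, zero_smul, add_zero] at horth
    linarith

end
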